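/- arXiv:1304.3617 — 3 statements merged into one kernel-verified Lean document; each statement's English description precedes it below -/
import Mathlib

section
/- (Segre-type lemma of tangents) Let H be a generalized hyperfocused arc of size 2n in PG(2,p), p prime, p > 3, with blocking set B, and define b_{ij} as above. Then for any three distinct indices i, j, k one has b_{ij} · b_{jk} · b_{ki} = 1. -/
open Projectivization

/-- The projective plane `PG(2,K)` as the projectivization of `K³`. -/
abbrev PG2 (K : Type) [Field K] := Projectivization K (Fin 3 → K)

/-- Three points of `PG(2,K)` are collinear: they lie on a common line
(the kernel of a nonzero linear functional). -/
def Collin {K : Type} [Field K] (P Q R : PG2 K) : Prop :=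
  ∃ f : (Fin 3 → K) →ₗ[K] K, f ≠ 0 ∧ f P.rep = 0 ∧ f Q.rep = 0 ∧ f R.rep = 0

/-- An arc: no three distinct points collinear. -/
def IsArc {K : Type} [Field K] (H : Finset (PG2 K)) : Prop :=
  ∀ P ∈ H, ∀ Q ∈ H, ∀ R ∈ H, P ≠ Q → P ≠ R → Q ≠ R → ¬ Collin P Q R

/-- A generalized hyperfocused arc with blocking set `B`:
`H` is an arc, `B` is disjoint from `H`, `|B| = |H| - 1`, and every
secant of `H` contains a point of `B`. -/
def IsGHA {K : Type} [Field K] (H B : Finset (PG2 K)) : Prop :=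
  IsArc H ∧ Disjoint H B ∧ B.card + 1 = H.card ∧
    ∀ P ∈ H, ∀ Q ∈ H, P ≠ Q → ∃ X ∈ B, Collin P Q X

/-- Projective equality of vector representatives. -/
def peq {K : Type} [Field K] (u v : Fin 3 → K) : Prop :=
  ∃ l : K, l ≠ 0 ∧ u = l • v

namespace SegreAux

variable {K : Type} [Field K]

/-- Explicit 3×3 determinant of three row vectors. -/
def D3 (u v w : Fin 3 → K) : K :=
  u 0 * (v 1 * w 2 - v 2 * w 1) - u 1 * (v 0 * w 2 - v 2 * w 0) + u 2 * (v 0 * w 1 - v 1 * w 0)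

lemma det_eq_D3 (u v w : Fin 3 → K) : (Matrix.of ![u, v, w]).det = D3 u v w := by
  rw [Matrix.det_fin_three]
  simp [D3, Matrix.of_apply]
  ring

lemma D3_smul3 (u v w : Fin 3 → K) (t : K) : D3 u v (t • w) = t * D3 u v w := by
  simp only [D3, Pi.smul_apply, smul_eq_mul]; ring

lemma D3_add_smul (u v x y : Fin 3 → K) (t : K) :
    D3 u v (x + t • y) = D3 u v x + t * D3 u v y := by
  simp only [D3, Pi.add_apply, Pi.smul_apply, smul_eq_mul]; ring

lemma D3_self13 (u v : Fin 3 → K) : D3 u v u = 0 := by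
  simp only [D3]; ring

lemma D3_self23 (u v : Fin 3 → K) : D3 u v v = 0 := by
  simp only [D3]; ring

lemma D3_cyc (u v w : Fin 3 → K) : D3 u v w = D3 w u v := by
  simp only [D3]; ring

lemma rep_spec (v : Fin 3 → K) (hv : v ≠ 0) :
    ∃ d : K, d ≠ 0 ∧ (Projectivization.mk K v hv).rep = d • v := by
  obtain ⟨a, ha⟩ := Projectivization.exists_smul_eq_mk_rep K v hv
  exact ⟨(a : K), a.ne_zero, by rw [← ha, Units.smul_def]⟩

lemma collin_mk_iff (u v w : Fin 3 → K) (hu : u ≠ 0) (hv : v ≠ 0) (hw : w ≠ 0) :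
    Collin (Projectivization.mk K u hu) (Projectivization.mk K v hv)
      (Projectivization.mk K w hw) ↔ D3 u v w = 0 := by
  have repzero : ∀ (x : Fin 3 → K) (hx : x ≠ 0) (f : (Fin 3 → K) →ₗ[K] K),
      f (Projectivization.mk K x hx).rep = 0 ↔ f x = 0 := by
    intro x hx f
    obtain ⟨d, hd, hrep⟩ := rep_spec x hx
    rw [hrep, map_smul, smul_eq_mul, mul_eq_zero]
    exact ⟨fun h => h.resolve_left hd, Or.inr⟩
  rw [← det_eq_D3, ← Matrix.exists_mulVec_eq_zero_iff]
  constructor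
  · rintro ⟨f, hf, h1, h2, h3⟩
    rw [repzero] at h1 h2 h3
    have hfx : ∀ x : Fin 3 → K, f x = ∑ r, x r * f (fun j => if r = j then 1 else 0) := by
      intro x
      conv_lhs => rw [pi_eq_sum_univ x, map_sum]
      exact Finset.sum_congr rfl fun r _ => by rw [map_smul, smul_eq_mul]
    refine ⟨fun r => f (fun j => if r = j then 1 else 0), ?_, ?_⟩
    · intro hc
      apply hf
      apply LinearMap.ext
      intro x
      rw [hfx x, LinearMap.zero_apply]
      refine Finset.sum_eq_zero fun r _ => ?_
      rw [congrFun hc r, Pi.zero_apply, mul_zero]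
    · funext r
      rw [hfx u, Fin.sum_univ_three] at h1
      rw [hfx v, Fin.sum_univ_three] at h2
      rw [hfx w, Fin.sum_univ_three] at h3
      fin_cases r <;>
        simp [Matrix.mulVec, dotProduct, Fin.sum_univ_three] <;>
        [exact h1; exact h2; exact h3]
  · rintro ⟨c, hc0, hMc⟩
    refine ⟨∑ r, c r • LinearMap.proj r, ?_, ?_, ?_, ?_⟩
    · obtain ⟨r, hr⟩ := Function.ne_iff.mp hc0
      intro hzero
      apply hr
      have := congrFun (congrArg (fun (g : (Fin 3 → K) →ₗ[K] K) (x : Fin 3 → K) => g x) hzero)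
        (fun j => if j = r then 1 else 0)
      simpa [LinearMap.sum_apply, LinearMap.smul_apply, LinearMap.proj_apply, smul_eq_mul,
        mul_ite, Finset.sum_ite_eq'] using this
    all_goals
      rw [repzero]
      simp only [LinearMap.sum_apply, LinearMap.smul_apply, LinearMap.proj_apply, smul_eq_mul]
      rw [Fin.sum_univ_three]
    · have := congrFun hMc 0
      simp [Matrix.mulVec, dotProduct, Fin.sum_univ_three] at this
      linear_combination this
    · have := congrFun hMc 1
      simp [Matrix.mulVec, dotProduct, Fin.sum_univ_three] at this
      linear_combination this
    · have := congrFun hMc 2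
      simp [Matrix.mulVec, dotProduct, Fin.sum_univ_three] at this
      linear_combination this

/-- The coordinate-ratio function used in Segre's argument. -/
noncomputable def rr (u₁ u₂ v₁ v₂ : Fin 3 → K) (X : Projectivization K (Fin 3 → K)) : K :=
  D3 u₁ u₂ X.rep / D3 v₁ v₂ X.rep

lemma rr_mk (u₁ u₂ v₁ v₂ v : Fin 3 → K) (hv : v ≠ 0) :
    rr u₁ u₂ v₁ v₂ (Projectivization.mk K v hv) = D3 u₁ u₂ v / D3 v₁ v₂ v := by
  obtain ⟨d, hd0, hrep⟩ := rep_spec v hv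
  rw [rr, hrep, D3_smul3, D3_smul3, mul_div_mul_left _ _ hd0]

end SegreAux

open SegreAux in
/-- Segre-type lemma of tangents: `b_{ij} b_{jk} b_{ki} = 1`. -/
theorem statement2 {p : ℕ} [Fact p.Prime] [DecidableEq (PG2 (ZMod p))] (hp : 3 < p) (n : ℕ)
    (E : Fin (2 * n) → (Fin 3 → ZMod p)) (hE : ∀ i, E i ≠ 0)
    (hinj : Function.Injective fun i => Projectivization.mk (ZMod p) (E i) (hE i))
    (B : Finset (PG2 (ZMod p)))
    (hGHA : IsGHA (Finset.image (fun i => Projectivization.mk (ZMod p) (E i) (hE i))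
      Finset.univ) B)
    (b : Fin (2 * n) → Fin (2 * n) → ZMod p)
    (hb : ∀ i j, i ≠ j → b i j ≠ 0)
    (hbnz : ∀ i j, i ≠ j → E i + b i j • E j ≠ 0)
    (hbB : ∀ i j, (h : i ≠ j) →
      Projectivization.mk (ZMod p) (E i + b i j • E j) (hbnz i j h) ∈ B)
    (i j k : Fin (2 * n)) (hij : i ≠ j) (hjk : j ≠ k) (hki : k ≠ i) :
    b i j * b j k * b k i = 1 := by
  obtain ⟨harc0, hdisj, hcard, hblock⟩ := hGHA
  -- the arc condition in determinant form
  have hPinj : ∀ a c : Fin (2*n), a ≠ c →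
      Projectivization.mk (ZMod p) (E a) (hE a) ≠ Projectivization.mk (ZMod p) (E c) (hE c) :=
    fun a c hac h => hac (hinj h)
  have harc : ∀ a c d : Fin (2*n), a ≠ c → a ≠ d → c ≠ d →
      D3 (E a) (E c) (E d) ≠ 0 := by
    intro a c d hac had hcd h0
    exact harc0 _ (Finset.mem_image_of_mem _ (Finset.mem_univ a))
      _ (Finset.mem_image_of_mem _ (Finset.mem_univ c))
      _ (Finset.mem_image_of_mem _ (Finset.mem_univ d))
      (hPinj a c hac) (hPinj a d had) (hPinj c d hcd)
      ((collin_mk_iff _ _ _ _ _ _).mpr h0)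
  -- the black point on the secant through `a` and `m`
  let φ : Fin (2*n) → Fin (2*n) → PG2 (ZMod p) := fun a m =>
    if h : a = m then Projectivization.mk (ZMod p) (E a) (hE a)
    else Projectivization.mk (ZMod p) (E a + b a m • E m) (hbnz a m h)
  have hφ : ∀ a m (h : a ≠ m),
      φ a m = Projectivization.mk (ZMod p) (E a + b a m • E m) (hbnz a m h) :=
    fun a m h => dif_neg h
  have hφB : ∀ a m, a ≠ m → φ a m ∈ B := by
    intro a m h; rw [hφ a m h]; exact hbB a m h
  -- injectivity of m ↦ φ a m
  have keyinj : ∀ a m m' : Fin (2*n), a ≠ m → a ≠ m' → φ a m = φ a m' → m = m' := by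
    intro a m m' ham ham' heq
    by_contra hmm
    rw [hφ a m ham, hφ a m' ham', Projectivization.mk_eq_mk_iff] at heq
    obtain ⟨d, hd⟩ := heq
    rw [Units.smul_def, smul_add, smul_smul] at hd
    -- hd : (d:K) • E a + ((d:K) * b a m') • E m' = E a + b a m • E m
    have hv : b a m • E m = (d : ZMod p) • E a + ((d : ZMod p) * b a m') • E m' - E a := by
      rw [hd]; abel
    have h2 : b a m * D3 (E a) (E m) (E m') = 0 := by
      have e1 : D3 (E a) (b a m • E m) (E m') = b a m * D3 (E a) (E m) (E m') := by
        simp only [D3, Pi.smul_apply, smul_eq_mul]; ring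
      rw [← e1, hv]
      simp only [D3, Pi.add_apply, Pi.sub_apply, Pi.smul_apply, smul_eq_mul]
      ring
    exact harc a m m' ham ham' hmm ((mul_eq_zero.mp h2).resolve_left (hb a m ham))
  -- cardinalities
  have hcardB : B.card = 2*n - 1 := by
    have hH : (Finset.image (fun i => Projectivization.mk (ZMod p) (E i) (hE i))
        Finset.univ).card = 2*n := by
      rw [Finset.card_image_of_injective _ hinj, Finset.card_univ, Fintype.card_fin]
    omega
  have hn1 : 1 ≤ 2*n := by have := i.isLt; omega
  -- each vertex enumeration is onto B
  have hfull : ∀ a : Fin (2*n), Finset.image (φ a) (Finset.univ.erase a) = B := by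
    intro a
    apply Finset.eq_of_subset_of_card_le
    · intro X hX
      obtain ⟨m, hm, rfl⟩ := Finset.mem_image.mp hX
      exact hφB a m (Ne.symm (Finset.mem_erase.mp hm).1)
    · have hinjOn : Set.InjOn (φ a) ↑(Finset.univ.erase a) := by
        intro m hm m' hm' h
        exact keyinj a m m' (Ne.symm (Finset.mem_erase.mp (Finset.mem_coe.mp hm)).1)
          (Ne.symm (Finset.mem_erase.mp (Finset.mem_coe.mp hm')).1) h
      rw [Finset.card_image_of_injOn hinjOn, Finset.card_erase_of_mem (Finset.mem_univ a),
        Finset.card_univ, Fintype.card_fin]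
      omega
  have hProd : ∀ (a : Fin (2*n)) (g : PG2 (ZMod p) → ZMod p),
      ∏ X ∈ B, g X = ∏ m ∈ Finset.univ.erase a, g (φ a m) := by
    intro a g
    rw [← hfull a, Finset.prod_image]
    intro m hm m' hm' h
    exact keyinj a m m' (Ne.symm (Finset.mem_erase.mp hm).1)
      (Ne.symm (Finset.mem_erase.mp hm').1) h
  -- the black point on a secant is symmetric
  have hsymm : ∀ a c : Fin (2*n), a ≠ c → φ a c = φ c a := by
    intro a c hac
    have hmem : φ c a ∈ Finset.image (φ a) (Finset.univ.erase a) := by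
      rw [hfull a]; exact hφB c a hac.symm
    obtain ⟨m, hm, hφm⟩ := Finset.mem_image.mp hmem
    have ham : a ≠ m := Ne.symm (Finset.mem_erase.mp hm).1
    suffices hmc : m = c by subst hmc; exact hφm
    by_contra hmc
    rw [hφ a m ham, hφ c a hac.symm, Projectivization.mk_eq_mk_iff] at hφm
    obtain ⟨d, hd⟩ := hφm
    rw [Units.smul_def, smul_add, smul_smul] at hd
    -- hd : (d:K) • E c + ((d:K) * b c a) • E a = E a + b a m • E m
    have hv : b a m • E m = (d : ZMod p) • E c + ((d : ZMod p) * b c a) • E a - E a := by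
      rw [hd]; abel
    have h2 : b a m * D3 (E a) (E m) (E c) = 0 := by
      have e1 : D3 (E a) (b a m • E m) (E c) = b a m * D3 (E a) (E m) (E c) := by
        simp only [D3, Pi.smul_apply, smul_eq_mul]; ring
      rw [← e1, hv]
      simp only [D3, Pi.add_apply, Pi.sub_apply, Pi.smul_apply, smul_eq_mul]
      ring
    exact harc a m c ham hac hmc ((mul_eq_zero.mp h2).resolve_left (hb a m ham))
  -- b i k * b k i = 1
  have hbsymm : b i k * b k i = 1 := by
    have h := hsymm i k (Ne.symm hki)
    rw [hφ i k (Ne.symm hki), hφ k i hki, Projectivization.mk_eq_mk_iff] at h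
    obtain ⟨d, hd⟩ := h
    rw [Units.smul_def, smul_add, smul_smul] at hd
    -- hd : (d:K) • E k + ((d:K) * b k i) • E i = E i + b i k • E k
    have hΔ : D3 (E i) (E k) (E j) ≠ 0 := harc i k j (Ne.symm hki) hij (Ne.symm hjk)
    have hΔ2 : D3 (E k) (E i) (E j) ≠ 0 := harc k i j hki (Ne.symm hjk) hij
    have e1 : ((d : ZMod p) * b k i) * D3 (E i) (E k) (E j) = 1 * D3 (E i) (E k) (E j) := by
      have lhs1 : D3 ((d : ZMod p) • E k + ((d : ZMod p) * b k i) • E i - b i k • E k)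
          (E k) (E j) = ((d : ZMod p) * b k i) * D3 (E i) (E k) (E j) := by
        simp only [D3, Pi.add_apply, Pi.sub_apply, Pi.smul_apply, smul_eq_mul]; ring
      have lhs2 : (d : ZMod p) • E k + ((d : ZMod p) * b k i) • E i - b i k • E k = E i := by
        rw [hd]; abel
      rw [← lhs1, lhs2, one_mul]
    have e2 : (d : ZMod p) = b i k := by
      have l1 : D3 ((d : ZMod p) • E k + ((d : ZMod p) * b k i) • E i) (E i) (E j)
          = (d : ZMod p) * D3 (E k) (E i) (E j) := by
        simp only [D3, Pi.add_apply, Pi.smul_apply, smul_eq_mul]; ring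
      have l2 : D3 (E i + b i k • E k) (E i) (E j) = b i k * D3 (E k) (E i) (E j) := by
        simp only [D3, Pi.add_apply, Pi.smul_apply, smul_eq_mul]; ring
      exact mul_right_cancel₀ hΔ2 (by rw [← l1, hd, l2])
    have e3 := mul_right_cancel₀ hΔ e1
    rw [e2] at e3
    exact e3
  -- distinctness of the three special black points
  have hd12 : φ i j ≠ φ j k := by
    intro h
    rw [hsymm i j hij] at h
    exact hki (keyinj j i k (Ne.symm hij) hjk h).symm
  have hd13 : φ i j ≠ φ i k := fun h => hjk (keyinj i j k hij (Ne.symm hki) h)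
  have hd23 : φ j k ≠ φ i k := by
    intro h
    rw [hsymm j k hjk, hsymm i k (Ne.symm hki)] at h
    exact hij (keyinj k j i (Ne.symm hjk) hki h).symm
  -- the index set away from the triangle
  set U3 : Finset (Fin (2*n)) := Finset.univ \ {i, j, k} with hU3
  have hmemU3 : ∀ m : Fin (2*n), m ∈ U3 ↔ (m ≠ i ∧ m ≠ j ∧ m ≠ k) := by
    intro m
    simp [hU3, Finset.mem_sdiff, Finset.mem_insert, Finset.mem_singleton, not_or]
  have hsplit1 : Finset.univ.erase i = insert j (insert k U3) := by
    ext m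
    simp only [Finset.mem_erase, Finset.mem_univ, and_true, Finset.mem_insert, hmemU3]
    constructor
    · intro hmi
      by_cases hmj : m = j
      · exact Or.inl hmj
      by_cases hmk : m = k
      · exact Or.inr (Or.inl hmk)
      exact Or.inr (Or.inr ⟨hmi, hmj, hmk⟩)
    · rintro (rfl | rfl | ⟨h1, _, _⟩)
      · exact Ne.symm hij
      · exact hki
      · exact h1
  have hsplit2 : Finset.univ.erase j = insert k (insert i U3) := by
    ext m
    simp only [Finset.mem_erase, Finset.mem_univ, and_true, Finset.mem_insert, hmemU3]
    constructor
    · intro hmj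
      by_cases hmk : m = k
      · exact Or.inl hmk
      by_cases hmi : m = i
      · exact Or.inr (Or.inl hmi)
      exact Or.inr (Or.inr ⟨hmi, hmj, hmk⟩)
    · rintro (rfl | rfl | ⟨_, h2, _⟩)
      · exact Ne.symm hjk
      · exact hij
      · exact h2
  have hsplit3 : Finset.univ.erase k = insert i (insert j U3) := by
    ext m
    simp only [Finset.mem_erase, Finset.mem_univ, and_true, Finset.mem_insert, hmemU3]
    constructor
    · intro hmk
      by_cases hmi : m = i
      · exact Or.inl hmi
      by_cases hmj : m = j
      · exact Or.inr (Or.inl hmj)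
      exact Or.inr (Or.inr ⟨hmi, hmj, hmk⟩)
    · rintro (rfl | rfl | ⟨_, _, h3⟩)
      · exact Ne.symm hki
      · exact hjk
      · exact h3
  have hkU3 : k ∉ U3 := fun h => ((hmemU3 k).mp h).2.2 rfl
  have hiU3 : i ∉ U3 := fun h => ((hmemU3 i).mp h).1 rfl
  have hjU3 : j ∉ U3 := fun h => ((hmemU3 j).mp h).2.1 rfl
  have hjkU3 : j ∉ insert k U3 := by
    intro h
    rcases Finset.mem_insert.mp h with h | h
    · exact hjk h
    · exact hjU3 h
  have hkiU3 : k ∉ insert i U3 := by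
    intro h
    rcases Finset.mem_insert.mp h with h | h
    · exact hki h
    · exact hkU3 h
  have hijU3 : i ∉ insert j U3 := by
    intro h
    rcases Finset.mem_insert.mp h with h | h
    · exact hij h
    · exact hiU3 h
  -- the three cut-off ratio functions
  set g1 : PG2 (ZMod p) → ZMod p := fun X =>
    if X = φ i j ∨ X = φ i k then 1 else rr (E k) (E i) (E i) (E j) X with hg1
  set g2 : PG2 (ZMod p) → ZMod p := fun X =>
    if X = φ j k ∨ X = φ j i then 1 else rr (E i) (E j) (E j) (E k) X with hg2
  set g3 : PG2 (ZMod p) → ZMod p := fun X =>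
    if X = φ k i ∨ X = φ k j then 1 else rr (E j) (E k) (E k) (E i) X with hg3
  have hΔ : D3 (E i) (E j) (E k) ≠ 0 := harc i j k hij (Ne.symm hki) hjk
  have c1 : D3 (E j) (E k) (E i) = D3 (E i) (E j) (E k) := by rw [D3_cyc]
  have c2 : D3 (E k) (E i) (E j) = D3 (E i) (E j) (E k) := by rw [D3_cyc, D3_cyc]
  -- evaluation of the three products by vertex enumeration
  have hQ1 : ∏ X ∈ B, g1 X
      = ∏ m ∈ U3, (D3 (E k) (E i) (E m) / D3 (E i) (E j) (E m)) := by
    rw [hProd i g1, hsplit1, Finset.prod_insert hjkU3, Finset.prod_insert hkU3]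
    have v1 : g1 (φ i j) = 1 := by simp only [hg1]; exact if_pos (Or.inl trivial)
    have v2 : g1 (φ i k) = 1 := by simp only [hg1]; exact if_pos (Or.inr trivial)
    rw [v1, v2, one_mul, one_mul]
    apply Finset.prod_congr rfl
    intro m hm
    obtain ⟨hmi, hmj, hmk⟩ := (hmemU3 m).mp hm
    have hne1 : φ i m ≠ φ i j := fun h => hmj (keyinj i m j (Ne.symm hmi) hij h)
    have hne2 : φ i m ≠ φ i k := fun h => hmk (keyinj i m k (Ne.symm hmi) (Ne.symm hki) h)
    have hval : g1 (φ i m) = rr (E k) (E i) (E i) (E j) (φ i m) := by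
      simp only [hg1]
      rw [if_neg]
      rintro (h | h)
      exacts [hne1 h, hne2 h]
    rw [hval, hφ i m (Ne.symm hmi), rr_mk]
    simp only [D3_add_smul, D3_self13, D3_self23, mul_zero, add_zero, zero_add]
    rw [mul_div_mul_left _ _ (hb i m (Ne.symm hmi))]
  have hQ2 : ∏ X ∈ B, g2 X
      = ∏ m ∈ U3, (D3 (E i) (E j) (E m) / D3 (E j) (E k) (E m)) := by
    rw [hProd j g2, hsplit2, Finset.prod_insert hkiU3, Finset.prod_insert hiU3]
    have v1 : g2 (φ j k) = 1 := by simp only [hg2]; exact if_pos (Or.inl trivial)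
    have v2 : g2 (φ j i) = 1 := by simp only [hg2]; exact if_pos (Or.inr trivial)
    rw [v1, v2, one_mul, one_mul]
    apply Finset.prod_congr rfl
    intro m hm
    obtain ⟨hmi, hmj, hmk⟩ := (hmemU3 m).mp hm
    have hne1 : φ j m ≠ φ j k := fun h => hmk (keyinj j m k (Ne.symm hmj) hjk h)
    have hne2 : φ j m ≠ φ j i := fun h => hmi (keyinj j m i (Ne.symm hmj) (Ne.symm hij) h)
    have hval : g2 (φ j m) = rr (E i) (E j) (E j) (E k) (φ j m) := by
      simp only [hg2]
      rw [if_neg]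
      rintro (h | h)
      exacts [hne1 h, hne2 h]
    rw [hval, hφ j m (Ne.symm hmj), rr_mk]
    simp only [D3_add_smul, D3_self13, D3_self23, mul_zero, add_zero, zero_add]
    rw [mul_div_mul_left _ _ (hb j m (Ne.symm hmj))]
  have hQ3 : ∏ X ∈ B, g3 X
      = ∏ m ∈ U3, (D3 (E j) (E k) (E m) / D3 (E k) (E i) (E m)) := by
    rw [hProd k g3, hsplit3, Finset.prod_insert hijU3, Finset.prod_insert hjU3]
    have v1 : g3 (φ k i) = 1 := by simp only [hg3]; exact if_pos (Or.inl trivial)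
    have v2 : g3 (φ k j) = 1 := by simp only [hg3]; exact if_pos (Or.inr trivial)
    rw [v1, v2, one_mul, one_mul]
    apply Finset.prod_congr rfl
    intro m hm
    obtain ⟨hmi, hmj, hmk⟩ := (hmemU3 m).mp hm
    have hne1 : φ k m ≠ φ k i := fun h => hmi (keyinj k m i (Ne.symm hmk) hki h)
    have hne2 : φ k m ≠ φ k j := fun h => hmj (keyinj k m j (Ne.symm hmk) (Ne.symm hjk) h)
    have hval : g3 (φ k m) = rr (E j) (E k) (E k) (E i) (φ k m) := by
      simp only [hg3]
      rw [if_neg]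
      rintro (h | h)
      exacts [hne1 h, hne2 h]
    rw [hval, hφ k m (Ne.symm hmk), rr_mk]
    simp only [D3_add_smul, D3_self13, D3_self23, mul_zero, add_zero, zero_add]
    rw [mul_div_mul_left _ _ (hb k m (Ne.symm hmk))]
  -- the index-side product telescopes to 1
  have hA : (∏ m ∈ U3, (D3 (E k) (E i) (E m) / D3 (E i) (E j) (E m)))
      * (∏ m ∈ U3, (D3 (E i) (E j) (E m) / D3 (E j) (E k) (E m)))
      * (∏ m ∈ U3, (D3 (E j) (E k) (E m) / D3 (E k) (E i) (E m))) = 1 := by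
    rw [← Finset.prod_mul_distrib, ← Finset.prod_mul_distrib]
    apply Finset.prod_eq_one
    intro m hm
    obtain ⟨hmi, hmj, hmk⟩ := (hmemU3 m).mp hm
    have hA0 : D3 (E k) (E i) (E m) ≠ 0 := harc k i m hki (Ne.symm hmk) (Ne.symm hmi)
    have hB0 : D3 (E i) (E j) (E m) ≠ 0 := harc i j m hij (Ne.symm hmi) (Ne.symm hmj)
    have hC0 : D3 (E j) (E k) (E m) ≠ 0 := harc j k m hjk (Ne.symm hmj) (Ne.symm hmk)
    field_simp
  -- the B-side product: special points
  have hS : ({φ i j, φ j k, φ i k} : Finset (PG2 (ZMod p))) ⊆ B := by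
    intro X hX
    simp only [Finset.mem_insert, Finset.mem_singleton] at hX
    rcases hX with rfl | rfl | rfl
    · exact hφB i j hij
    · exact hφB j k hjk
    · exact hφB i k (Ne.symm hki)
  have val1 : g1 (φ i j) * g2 (φ i j) * g3 (φ i j) = (b i j)⁻¹ := by
    have e1 : g1 (φ i j) = 1 := by simp only [hg1]; exact if_pos (Or.inl trivial)
    have e2 : g2 (φ i j) = 1 := by simp only [hg2]; exact if_pos (Or.inr (hsymm i j hij))
    have e3 : g3 (φ i j) = (b i j)⁻¹ := by
      simp only [hg3]
      rw [if_neg, hφ i j hij, rr_mk]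
      · simp only [D3_add_smul, D3_self13, D3_self23, mul_zero, add_zero, zero_add]
        rw [c1, c2, mul_comm, ← div_div, div_self hΔ, one_div]
      · rintro (h | h)
        · rw [hsymm k i hki] at h; exact hd13 h
        · rw [hsymm k j (Ne.symm hjk)] at h; exact hd12 h
    rw [e1, e2, e3, one_mul, one_mul]
  have val2 : g1 (φ j k) * g2 (φ j k) * g3 (φ j k) = (b j k)⁻¹ := by
    have e2 : g2 (φ j k) = 1 := by simp only [hg2]; exact if_pos (Or.inl trivial)
    have e3 : g3 (φ j k) = 1 := by simp only [hg3]; exact if_pos (Or.inr (hsymm j k hjk))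
    have e1 : g1 (φ j k) = (b j k)⁻¹ := by
      simp only [hg1]
      rw [if_neg, hφ j k hjk, rr_mk]
      · simp only [D3_add_smul, D3_self13, D3_self23, mul_zero, add_zero, zero_add]
        rw [c2, mul_comm, ← div_div, div_self hΔ, one_div]
      · rintro (h | h)
        · exact hd12 h.symm
        · exact hd23 h
    rw [e1, e2, e3, mul_one, mul_one]
  have val3 : g1 (φ i k) * g2 (φ i k) * g3 (φ i k) = b i k := by
    have e1 : g1 (φ i k) = 1 := by simp only [hg1]; exact if_pos (Or.inr trivial)
    have e3 : g3 (φ i k) = 1 := by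
      simp only [hg3]; exact if_pos (Or.inl (hsymm i k (Ne.symm hki)))
    have e2 : g2 (φ i k) = b i k := by
      simp only [hg2]
      rw [if_neg, hφ i k (Ne.symm hki), rr_mk]
      · simp only [D3_add_smul, D3_self13, D3_self23, mul_zero, add_zero, zero_add]
        rw [c1, mul_div_assoc, div_self hΔ, mul_one]
      · rintro (h | h)
        · exact hd23 h.symm
        · rw [hsymm j i (Ne.symm hij)] at h; exact hd13 h.symm
    rw [e1, e2, e3, one_mul, mul_one]
  have hprodS : ∏ X ∈ ({φ i j, φ j k, φ i k} : Finset (PG2 (ZMod p))),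
      (g1 X * g2 X * g3 X) = (b i j)⁻¹ * ((b j k)⁻¹ * b i k) := by
    rw [Finset.prod_insert (by
        simp only [Finset.mem_insert, Finset.mem_singleton]
        rintro (h | h)
        exacts [hd12 h, hd13 h]),
      Finset.prod_insert (by simp only [Finset.mem_singleton]; exact hd23),
      Finset.prod_singleton, val1, val2, val3]
  -- generic black points contribute 1
  have hnzB : ∀ X ∈ B \ ({φ i j, φ j k, φ i k} : Finset (PG2 (ZMod p))),
      g1 X * g2 X * g3 X = 1 := by
    intro X hX
    obtain ⟨hXB, hXS⟩ := Finset.mem_sdiff.mp hX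
    simp only [Finset.mem_insert, Finset.mem_singleton] at hXS
    push_neg at hXS
    obtain ⟨hX1, hX2, hX3⟩ := hXS
    have hLk : D3 (E i) (E j) X.rep ≠ 0 := by
      have hmem : X ∈ Finset.image (φ i) (Finset.univ.erase i) := by
        rw [hfull i]; exact hXB
      obtain ⟨m, hm, hm2⟩ := Finset.mem_image.mp hmem
      have hmi : m ≠ i := (Finset.mem_erase.mp hm).1
      have hmj : m ≠ j := fun h => hX1 (by rw [← hm2, h])
      subst hm2
      obtain ⟨d, hd0, hrep⟩ := rep_spec _ (hbnz i m (Ne.symm hmi))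
      rw [hφ i m (Ne.symm hmi), hrep, D3_smul3]
      simp only [D3_add_smul, D3_self13, D3_self23, mul_zero, add_zero, zero_add]
      exact mul_ne_zero hd0 (mul_ne_zero (hb i m (Ne.symm hmi))
        (harc i j m hij (Ne.symm hmi) (Ne.symm hmj)))
    have hLi : D3 (E j) (E k) X.rep ≠ 0 := by
      have hmem : X ∈ Finset.image (φ j) (Finset.univ.erase j) := by
        rw [hfull j]; exact hXB
      obtain ⟨m, hm, hm2⟩ := Finset.mem_image.mp hmem
      have hmj : m ≠ j := (Finset.mem_erase.mp hm).1
      have hmk : m ≠ k := fun h => hX2 (by rw [← hm2, h])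
      subst hm2
      obtain ⟨d, hd0, hrep⟩ := rep_spec _ (hbnz j m (Ne.symm hmj))
      rw [hφ j m (Ne.symm hmj), hrep, D3_smul3]
      simp only [D3_add_smul, D3_self13, D3_self23, mul_zero, add_zero, zero_add]
      exact mul_ne_zero hd0 (mul_ne_zero (hb j m (Ne.symm hmj))
        (harc j k m hjk (Ne.symm hmj) (Ne.symm hmk)))
    have hLj : D3 (E k) (E i) X.rep ≠ 0 := by
      have hmem : X ∈ Finset.image (φ k) (Finset.univ.erase k) := by
        rw [hfull k]; exact hXB
      obtain ⟨m, hm, hm2⟩ := Finset.mem_image.mp hmem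
      have hmk : m ≠ k := (Finset.mem_erase.mp hm).1
      have hmi : m ≠ i := fun h => hX3 (by rw [← hm2, h, hsymm k i hki])
      subst hm2
      obtain ⟨d, hd0, hrep⟩ := rep_spec _ (hbnz k m (Ne.symm hmk))
      rw [hφ k m (Ne.symm hmk), hrep, D3_smul3]
      simp only [D3_add_smul, D3_self13, D3_self23, mul_zero, add_zero, zero_add]
      exact mul_ne_zero hd0 (mul_ne_zero (hb k m (Ne.symm hmk))
        (harc k i m hki (Ne.symm hmk) (Ne.symm hmi)))
    have e1 : g1 X = rr (E k) (E i) (E i) (E j) X := by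
      simp only [hg1]
      rw [if_neg]
      rintro (h | h)
      exacts [hX1 h, hX3 h]
    have e2 : g2 X = rr (E i) (E j) (E j) (E k) X := by
      simp only [hg2]
      rw [if_neg]
      rintro (h | h)
      · exact hX2 h
      · rw [hsymm j i (Ne.symm hij)] at h; exact hX1 h
    have e3 : g3 X = rr (E j) (E k) (E k) (E i) X := by
      simp only [hg3]
      rw [if_neg]
      rintro (h | h)
      · rw [hsymm k i hki] at h; exact hX3 h
      · rw [hsymm k j (Ne.symm hjk)] at h; exact hX2 h
    rw [e1, e2, e3]
    show (D3 (E k) (E i) X.rep / D3 (E i) (E j) X.rep)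
        * (D3 (E i) (E j) X.rep / D3 (E j) (E k) X.rep)
        * (D3 (E j) (E k) X.rep / D3 (E k) (E i) X.rep) = 1
    field_simp
  -- combine
  have hBprod : ∏ X ∈ B, (g1 X * g2 X * g3 X) = (b i j)⁻¹ * ((b j k)⁻¹ * b i k) := by
    rw [← Finset.prod_sdiff hS, Finset.prod_eq_one hnzB, one_mul, hprodS]
  have hsplitprod : ∏ X ∈ B, (g1 X * g2 X * g3 X)
      = (∏ X ∈ B, g1 X) * (∏ X ∈ B, g2 X) * (∏ X ∈ B, g3 X) := by
    rw [Finset.prod_mul_distrib, Finset.prod_mul_distrib]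
  have h1 : (b i j)⁻¹ * ((b j k)⁻¹ * b i k) = 1 := by
    rw [← hBprod, hsplitprod, hQ1, hQ2, hQ3]
    exact hA
  have hbij := hb i j hij
  have hbjk := hb j k hjk
  have hbki := hb k i hki
  have h2 : b i k = b i j * b j k := by
    field_simp at h1
    linear_combination h1
  rw [h2] at hbsymm
  linear_combination hbsymm
end

section
/- Let p be an odd prime, m ≥ 5 a divisor of p+1, and v ∈ F_{p^2} a primitive m-th root of unity. Then the three elements 1, (v^p + v)/2, (v^{2p} + v^2)/2 of F_{p^2} are pairwise distinct and all satisfy x^p = x; in particular, viewed as points of AG(2,p) = F_{p^2}, they are collinear. -/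
open Projectivization

open Polynomial in
lemma mem_prime_field {p : ℕ} [Fact p.Prime] {K : Type} [Field K] [Algebra (ZMod p) K]
    {x : K} (hx : x ^ p = x) : ∃ t : ZMod p, x = algebraMap (ZMod p) K t := by
  classical
  have hp : p.Prime := Fact.out
  set f : K[X] := X ^ p - X with hf
  have hdeg : f.degree = p := by
    rw [hf]
    rw [degree_sub_eq_left_of_degree_lt] <;> rw [degree_X_pow]
    · rw [degree_X]
      exact_mod_cast hp.one_lt
  have hf0 : f ≠ 0 := fun h => by simp [h] at hdeg
  have hndeg : f.natDegree = p := natDegree_eq_of_degree_eq_some hdeg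
  set T : Finset K := Finset.univ.image (algebraMap (ZMod p) K) with hT
  have hTsub : T ⊆ f.roots.toFinset := by
    intro a ha
    rw [hT, Finset.mem_image] at ha
    obtain ⟨t, -, rfl⟩ := ha
    rw [Multiset.mem_toFinset, mem_roots hf0]
    simp only [hf, IsRoot, eval_sub, eval_pow, eval_X]
    rw [← map_pow, ZMod.pow_card, sub_self]
  have hcardT : T.card = p := by
    rw [hT, Finset.card_image_of_injective _ (algebraMap (ZMod p) K).injective,
      Finset.card_univ, ZMod.card]
  have hle : f.roots.toFinset.card ≤ p := by
    calc f.roots.toFinset.card ≤ Multiset.card f.roots := Multiset.toFinset_card_le _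
    _ ≤ f.natDegree := f.card_roots'
    _ = p := hndeg
  have hEq : T = f.roots.toFinset := Finset.eq_of_subset_of_card_le hTsub (by omega)
  have hxmem : x ∈ f.roots.toFinset := by
    rw [Multiset.mem_toFinset, mem_roots hf0]
    simp [hf, IsRoot, hx]
  rw [← hEq, hT, Finset.mem_image] at hxmem
  obtain ⟨t, -, ht⟩ := hxmem
  exact ⟨t, ht.symm⟩



/-- For `m ≥ 5`, `m ∣ p+1`, and `v` a primitive `m`-th root of unity in `F_{p²}`,
the elements `1`, `(vᵖ+v)/2`, `(v²ᵖ+v²)/2` are pairwise distinct, all fixed by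
Frobenius, and collinear as points of `AG(2,p) = F_{p²}`. -/
theorem statement11 {p : ℕ} [Fact p.Prime] (hodd : Odd p)
    (m : ℕ) (hm : 5 ≤ m) (hmdvd : m ∣ p + 1)
    (v : GaloisField p 2) (hord : orderOf v = m) :
    (1 : GaloisField p 2) ≠ (v ^ p + v) / 2 ∧
    (1 : GaloisField p 2) ≠ (v ^ (2 * p) + v ^ 2) / 2 ∧
    (v ^ p + v) / 2 ≠ (v ^ (2 * p) + v ^ 2) / 2 ∧
    ((1 : GaloisField p 2)) ^ p = 1 ∧
    ((v ^ p + v) / 2) ^ p = (v ^ p + v) / 2 ∧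
    ((v ^ (2 * p) + v ^ 2) / 2) ^ p = (v ^ (2 * p) + v ^ 2) / 2 ∧
    Collinear (ZMod p)
      ({1, (v ^ p + v) / 2, (v ^ (2 * p) + v ^ 2) / 2} : Set (GaloisField p 2)) := by
  have hp : p.Prime := Fact.out
  have hp2 : p ≠ 2 := by rintro rfl; exact (Nat.not_odd_iff_even.mpr (by norm_num)) hodd
  have h2 : (2 : GaloisField p 2) ≠ 0 := by
    have h2' : ((2 : ℕ) : GaloisField p 2) ≠ 0 := by
      rw [Ne, CharP.cast_eq_zero_iff (GaloisField p 2) p]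
      intro h
      have h1 := Nat.le_of_dvd (by norm_num) h
      have h2 := hp.two_le
      exact hp2 (by omega)
    simpa using h2'
  -- basic facts about v
  have hvm : v ^ m = 1 := by rw [← hord]; exact pow_orderOf_eq_one v
  have hv0 : v ≠ 0 := by
    rintro rfl
    rw [zero_pow (by omega)] at hvm
    exact zero_ne_one hvm
  have hvp1 : v ^ (p + 1) = 1 := orderOf_dvd_iff_pow_eq_one.mp (hord ▸ hmdvd)
  have hvp : v ^ p * v = 1 := by rw [← pow_succ]; exact hvp1
  have hv1 : v ≠ 1 := by
    rintro rfl
    rw [orderOf_one] at hord; omega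
  have hv2 : v ^ 2 ≠ 1 := by
    intro h
    have hd := orderOf_dvd_of_pow_eq_one h
    rw [hord] at hd
    have := Nat.le_of_dvd (by norm_num) hd; omega
  have hv3 : v ^ 3 ≠ 1 := by
    intro h
    have hd := orderOf_dvd_of_pow_eq_one h
    rw [hord] at hd
    have := Nat.le_of_dvd (by norm_num) hd; omega
  -- Frobenius fixes the three points (helper)
  have key : ∀ w : GaloisField p 2, w ^ (p + 1) = 1 →
      ((w ^ p + w) / 2) ^ p = (w ^ p + w) / 2 := by
    intro w hw
    have h2p : (2 : GaloisField p 2) ^ p = 2 := by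
      have he : (2 : GaloisField p 2) = algebraMap (ZMod p) (GaloisField p 2) 2 :=
        (map_ofNat _ 2).symm
      rw [he, ← map_pow, ZMod.pow_card]
    have hwpp : (w ^ p) ^ p = w := by
      obtain ⟨k, rfl⟩ : ∃ k, p = k + 1 := ⟨p - 1, by have := hp.two_le; omega⟩
      rw [← pow_mul]
      have hmul : (k + 1) * (k + 1) = (k + 1 + 1) * k + 1 := by ring
      rw [hmul, pow_succ, pow_mul, hw, one_pow, one_mul]
    rw [div_pow, h2p, add_pow_char, hwpp, add_comm]
  have key1 := key v hvp1
  have hv2p1 : (v ^ 2) ^ (p + 1) = 1 := by rw [← pow_mul, mul_comm, pow_mul, hvp1, one_pow]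
  have key2 := key (v ^ 2) hv2p1
  have h2pow : v ^ (2 * p) = (v ^ 2) ^ p := by rw [pow_mul]
  -- distinctness
  have hne1 : (1 : GaloisField p 2) ≠ (v ^ p + v) / 2 := by
    intro h
    rw [eq_div_iff h2, one_mul] at h
    have hmul : v ^ p * v + v * v = 2 * v := by
      rw [← add_mul]; linear_combination (-v) * h
    rw [hvp] at hmul
    have hsq : (v - 1) ^ 2 = 0 := by linear_combination hmul
    have hz := pow_eq_zero_iff (n := 2) (by norm_num) |>.mp hsq
    exact hv1 (by linear_combination hz)
  have hne2 : (1 : GaloisField p 2) ≠ (v ^ (2 * p) + v ^ 2) / 2 := by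
    intro h
    rw [h2pow, eq_div_iff h2, one_mul] at h
    have hv2p : (v ^ 2) ^ p * v ^ 2 = 1 := by
      rw [← pow_succ]; exact hv2p1
    have hmul : (v ^ 2) ^ p * v ^ 2 + v ^ 2 * v ^ 2 = 2 * v ^ 2 := by
      rw [← add_mul]; linear_combination (-(v ^ 2)) * h
    rw [hv2p] at hmul
    have hsq : (v ^ 2 - 1) ^ 2 = 0 := by linear_combination hmul
    have hz := pow_eq_zero_iff (n := 2) (by norm_num) |>.mp hsq
    exact hv2 (by linear_combination hz)
  have hne3 : (v ^ p + v) / 2 ≠ (v ^ (2 * p) + v ^ 2) / 2 := by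
    intro h
    rw [h2pow, div_eq_div_iff h2 h2] at h
    -- (v^p + v) * 2 = ((v^2)^p + v^2) * 2
    have h' : v ^ p + v = (v ^ 2) ^ p + v ^ 2 := by
      have := mul_right_cancel₀ h2 h
      linear_combination this
    -- multiply by v^2
    have hv2p : (v ^ 2) ^ p * v ^ 2 = 1 := by rw [← pow_succ]; exact hv2p1
    have hmul : v ^ p * v * v + v * v ^ 2 = (v ^ 2) ^ p * v ^ 2 + v ^ 2 * v ^ 2 := by
      linear_combination v ^ 2 * h'
    rw [hvp, hv2p, one_mul] at hmul
    -- v + v^3 = 1 + v^4, so (v-1)(v^3-1) = 0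
    have hfac : (v - 1) * (v ^ 3 - 1) = 0 := by linear_combination -hmul
    rcases mul_eq_zero.mp hfac with hz | hz
    · exact hv1 (by linear_combination hz)
    · exact hv3 (by linear_combination hz)
  refine ⟨hne1, hne2, hne3, one_pow p, key1, by rw [h2pow]; exact key2, ?_⟩
  -- collinearity
  obtain ⟨t₂, ht₂⟩ := mem_prime_field (p := p) key1
  obtain ⟨t₃, ht₃⟩ := mem_prime_field (p := p) (x := (v ^ (2 * p) + v ^ 2) / 2) (by rw [h2pow]; exact key2)
  have hmem : (1 : GaloisField p 2) ∈
      ({1, (v ^ p + v) / 2, (v ^ (2 * p) + v ^ 2) / 2} : Set (GaloisField p 2)) := by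
    simp
  rw [collinear_iff_of_mem hmem]
  refine ⟨1, ?_⟩
  rintro x (rfl | rfl | rfl)
  · exact ⟨0, by simp⟩
  · refine ⟨t₂ - 1, ?_⟩
    rw [ht₂, vadd_eq_add, Algebra.smul_def, mul_one, map_sub, map_one]
    ring
  · refine ⟨t₃ - 1, ?_⟩
    rw [ht₃, vadd_eq_add, Algebra.smul_def, mul_one, map_sub, map_one]
    ring
end

section
/- Let p be an odd prime and H a generalized hyperfocused arc of size 2n in PG(2,p) with blocking set B, with the normalized representation where the black point on the secant ⟨[E_i],[E_j]⟩ is [E_i+E_j]. If every 4-subset {E_i,E_j,E_k,E_l} of representatives with [E_i+E_j]=[E_k+E_l] (i,j,k,l distinct) satisfies E_i+E_j+E_k+E_l = 0, then 2n ≤ 4. -/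
/-!
Fix a black point `b`. Through each point `[Eᵢ]` of the arc pass `2n - 1` secants, whose black
points are pairwise distinct (two secants through `[Eᵢ]` meet only there), and `|B| = 2n - 1`;
so each `[Eᵢ]` has exactly one partner `σ i` with `[Eᵢ + E_{σ i}] = b`, and `σ` is a
fixed-point-free involution. Writing `Aᵢ = Eᵢ + E_{σ i}`, the hypothesis says `Aᵢ + Aⱼ = 0`
whenever `j ∉ {i, σ i}`. If `2n > 4` we find three mutually unpartnered indices `i, j, k`, and
then `2 Aᵢ = (Aᵢ + Aⱼ) + (Aᵢ + Aₖ) - (Aⱼ + Aₖ) = 0`, impossible for `Aᵢ ≠ 0` and `p` odd.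
-/

open Projectivization

section Plane

variable {K : Type} [Field K]

theorem exists_dual_ne_zero_apply_eq_zero (u v : Fin 3 → K) :
    ∃ f : (Fin 3 → K) →ₗ[K] K, f ≠ 0 ∧ f u = 0 ∧ f v = 0 := by
  classical
  have hlt : Submodule.span K ({u, v} : Set (Fin 3 → K)) < ⊤ := by
    refine span_lt_top_of_card_lt_finrank ?_
    calc ({u, v} : Set (Fin 3 → K)).toFinset.card
        ≤ ({u, v} : Finset (Fin 3 → K)).card := by simp
      _ ≤ 2 := Finset.card_le_two
      _ < Module.finrank K (Fin 3 → K) := by simp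
  obtain ⟨f, hf, hle⟩ := Submodule.exists_le_ker_of_lt_top _ hlt
  exact ⟨f, hf, hle (Submodule.subset_span (by simp)), hle (Submodule.subset_span (by simp))⟩

theorem map_mk_rep_eq_zero {f : (Fin 3 → K) →ₗ[K] K} {u : Fin 3 → K} (hu : u ≠ 0)
    (hfu : f u = 0) : f (mk K u hu).rep = 0 := by
  obtain ⟨a, ha⟩ := exists_smul_eq_mk_rep K u hu
  rw [← ha, Units.smul_def, map_smul, hfu, smul_zero]

theorem collin_mk_of_mem_span {u v w : Fin 3 → K} (hu : u ≠ 0) (hv : v ≠ 0) (hw : w ≠ 0)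
    (h : w ∈ Submodule.span K {u, v}) : Collin (mk K u hu) (mk K v hv) (mk K w hw) := by
  obtain ⟨f, hf, hfu, hfv⟩ := exists_dual_ne_zero_apply_eq_zero u v
  have hspan : Submodule.span K {u, v} ≤ LinearMap.ker f := by
    simp [Submodule.span_le, Set.insert_subset_iff, hfu, hfv]
  exact ⟨f, hf, map_mk_rep_eq_zero hu hfu, map_mk_rep_eq_zero hv hfv,
    map_mk_rep_eq_zero hw (hspan h)⟩

theorem peq_of_mk_eq_mk {u v : Fin 3 → K} {hu : u ≠ 0} {hv : v ≠ 0}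
    (h : mk K u hu = mk K v hv) : peq u v := by
  obtain ⟨a, ha⟩ := (mk_eq_mk_iff K u v hu hv).1 h
  exact ⟨a, a.ne_zero, ha.symm⟩

/-- Two secants of an arc through the same point `[u]` meet only in `[u]`. -/
theorem IsArc.mk_add_ne_mk_add {H : Finset (PG2 K)} (hH : IsArc H) {u v w : Fin 3 → K}
    {hu : u ≠ 0} {hv : v ≠ 0} {hw : w ≠ 0} (huH : mk K u hu ∈ H) (hvH : mk K v hv ∈ H)
    (hwH : mk K w hw ∈ H) (huv : mk K u hu ≠ mk K v hv) (huw : mk K u hu ≠ mk K w hw)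
    (hvw : mk K v hv ≠ mk K w hw) (huv' : u + v ≠ 0) (huw' : u + w ≠ 0) :
    mk K (u + v) huv' ≠ mk K (u + w) huw' := by
  intro h
  obtain ⟨a, ha⟩ := (mk_eq_mk_iff' K _ _ huv' huw').1 h
  refine hH _ huH _ hwH _ hvH huw huv hvw.symm (collin_mk_of_mem_span hu hw hv ?_)
  exact Submodule.mem_span_pair.2 ⟨a - 1, a, by linear_combination (norm := module) ha⟩

end Plane

theorem add_self_eq_zero_of_add_eq_zero_off_pair {ι V : Type*} [Fintype ι] [AddCommGroup V]
    {σ : ι → ι} {A : ι → V} (hcard : 4 < Fintype.card ι)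
    (hA : ∀ i j, j ≠ i → j ≠ σ i → A i + A j = 0) (i : ι) : A i + A i = 0 := by
  classical
  obtain ⟨j, -, hj⟩ := Finset.exists_mem_notMem_of_card_lt_card (s := {i, σ i}) (t := .univ)
    (Finset.card_le_two.trans_lt (by rw [Finset.card_univ]; omega))
  obtain ⟨k, -, hk⟩ := Finset.exists_mem_notMem_of_card_lt_card (s := {i, σ i, j, σ j})
    (t := .univ) (Finset.card_le_four.trans_lt (by rw [Finset.card_univ]; omega))
  simp only [Finset.mem_insert, Finset.mem_singleton, not_or] at hj hk
  have hij := hA i j hj.1 hj.2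
  have hik := hA i k hk.1 hk.2.1
  have hjk := hA j k hk.2.2.1 hk.2.2.2
  calc A i + A i = (A i + A j) + (A i + A k) - (A j + A k) := by abel
    _ = 0 := by rw [hij, hik, hjk]; abel

section Normalized

variable {K : Type} [Field K] {ι : Type*} [Fintype ι] {E : ι → Fin 3 → K} {hE : ∀ i, E i ≠ 0}
  {hnz : ∀ i j, i ≠ j → E i + E j ≠ 0}

theorem eq_of_mk_add_eq_mk_add [DecidableEq (PG2 K)]
    (hinj : Function.Injective fun i => mk K (E i) (hE i))
    (harc : IsArc (Finset.univ.image fun i => mk K (E i) (hE i))) {i j k : ι} (hij : i ≠ j)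
    (hik : i ≠ k) (h : mk K (E i + E j) (hnz i j hij) = mk K (E i + E k) (hnz i k hik)) :
    j = k := by
  by_contra hjk
  have hH (m : ι) : mk K (E m) (hE m) ∈ Finset.univ.image fun i => mk K (E i) (hE i) :=
    Finset.mem_image_of_mem _ (Finset.mem_univ m)
  exact harc.mk_add_ne_mk_add (hH i) (hH j) (hH k) (hinj.ne hij) (hinj.ne hik) (hinj.ne hjk) _ _ h

variable [DecidableEq (PG2 K)] {B : Finset (PG2 K)}
  (hinj : Function.Injective fun i => mk K (E i) (hE i))
  (harc : IsArc (Finset.univ.image fun i => mk K (E i) (hE i)))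
  (hB : B.card + 1 = Fintype.card ι)
  (hnorm : ∀ i j (h : i ≠ j), mk K (E i + E j) (hnz i j h) ∈ B)
include hinj harc hB hnorm

/-- Through each point of the arc there are `|B|` secants, with distinct black points,
so every black point lies on one of them. -/
theorem exists_mk_add_eq (i : ι) {b : PG2 K} (hb : b ∈ B) :
    ∃ j, ∃ h : i ≠ j, mk K (E i + E j) (hnz i j h) = b := by
  classical
  obtain ⟨j, hj, hjb⟩ := Finset.surj_on_of_inj_on_of_card_le (s := Finset.univ.erase i) (t := B)
    (fun j hj => mk K (E i + E j) (hnz i j (Finset.ne_of_mem_erase hj).symm))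
    (fun j hj => hnorm _ _ (Finset.ne_of_mem_erase hj).symm)
    (fun j k hj hk h => eq_of_mk_add_eq_mk_add hinj harc (Finset.ne_of_mem_erase hj).symm
      (Finset.ne_of_mem_erase hk).symm h)
    (by rw [Finset.card_erase_of_mem (Finset.mem_univ i), Finset.card_univ]; omega) b hb
  exact ⟨j, (Finset.ne_of_mem_erase hj).symm, hjb.symm⟩

theorem exists_involutive_partner {b : PG2 K} (hb : b ∈ B) :
    ∃ σ : ι → ι, ∃ hσ : ∀ i, i ≠ σ i,
      Function.Involutive σ ∧ ∀ i, mk K (E i + E (σ i)) (hnz i (σ i) (hσ i)) = b := by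
  choose σ hσ hσb using fun i => exists_mk_add_eq hinj harc hB hnorm i hb
  refine ⟨σ, hσ, fun i => ?_, hσb⟩
  refine eq_of_mk_add_eq_mk_add (hnz := hnz) hinj harc (hσ (σ i)) (hσ i).symm ?_
  rw [hσb]
  simp_rw [add_comm (E (σ i))]
  exact (hσb i).symm

end Normalized

/-- If in a normalized generalized hyperfocused arc every 4-subset with
`[Eᵢ+Eⱼ] = [Eₖ+Eₗ]` is special, then `2n ≤ 4`. -/
theorem statement16 {p : ℕ} [Fact p.Prime] (hodd : Odd p)
    [DecidableEq (PG2 (ZMod p))] (n : ℕ)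
    (E : Fin (2 * n) → (Fin 3 → ZMod p)) (hE : ∀ i, E i ≠ 0)
    (hinj : Function.Injective fun i => Projectivization.mk (ZMod p) (E i) (hE i))
    (B : Finset (PG2 (ZMod p)))
    (hGHA : IsGHA (Finset.image (fun i => Projectivization.mk (ZMod p) (E i) (hE i))
      Finset.univ) B)
    (hnz : ∀ i j : Fin (2 * n), i ≠ j → E i + E j ≠ 0)
    (hnorm : ∀ i j : Fin (2 * n), (h : i ≠ j) →
      Projectivization.mk (ZMod p) (E i + E j) (hnz i j h) ∈ B)
    (hspecial : ∀ i j k l : Fin (2 * n),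
      i ≠ j → i ≠ k → i ≠ l → j ≠ k → j ≠ l → k ≠ l →
      peq (E i + E j) (E k + E l) → E i + E j + E k + E l = 0) :
    2 * n ≤ 4 := by
  by_contra! hn
  have hcard : 4 < Fintype.card (Fin (2 * n)) := by simpa using hn
  have hB : B.card + 1 = Fintype.card (Fin (2 * n)) := by
    rw [hGHA.2.2.1, Finset.card_image_of_injective _ hinj, Finset.card_univ]
  let i₀ : Fin (2 * n) := ⟨0, by omega⟩
  let j₀ : Fin (2 * n) := ⟨1, by omega⟩
  have hij₀ : i₀ ≠ j₀ := by simp [i₀, j₀, Fin.ext_iff]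
  obtain ⟨σ, hσ, hinv, hσb⟩ :=
    exists_involutive_partner hinj hGHA.1 hB hnorm (hnorm i₀ j₀ hij₀)
  have hpairs : ∀ i j, j ≠ i → j ≠ σ i → E i + E (σ i) + (E j + E (σ j)) = 0 := by
    intro i j hji hjσ
    rw [← add_assoc]
    refine hspecial _ _ _ _ (hσ i) hji.symm ?_ hjσ.symm (hinv.injective.ne hji.symm) (hσ j)
      (peq_of_mk_eq_mk ((hσb i).trans (hσb j).symm))
    rintro rfl
    exact hjσ (hinv j).symm
  have h2 : (2 : ZMod p) ≠ 0 := Ring.two_ne_zero (by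
    rw [ZMod.ringChar_zmod_n]; rintro rfl; exact Nat.not_even_iff_odd.2 hodd even_two)
  have hzero := add_self_eq_zero_of_add_eq_zero_off_pair hcard hpairs i₀
  rw [← two_smul (ZMod p), smul_eq_zero, or_iff_right h2] at hzero
  exact hnz _ _ (hσ i₀) hzero
end
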